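/- For all integers q ≥ m ≥ 0: Σ_{p=m}^{q} f_p^{(q)}·c_m^{(p)} = δ_{m,q}, where f_p^{(q)} = (−1)^{p+q}·q!·(2q−p)! / (2^{2q−2p}·p!·(q−p)!) and δ_{m,q} is the Kronecker delta. -/

import Mathlib

open Finset

/-- The Pochhammer symbol `(f)_n = f (f+1) ⋯ (f+n-1)`, with `(f)_0 = 1`. -/
noncomputable def poch (f : ℝ) (n : ℕ) : ℝ := ∏ i ∈ Finset.range n, (f + (i : ℝ))

/-- The coefficients `c_m^{(p)} = (2m-p+2)_{2p-2m} / (2^{2p-2m} m! (p-m)!)` for `0 ≤ m ≤ p`,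
and `c_m^{(p)} = 0` for `m > p`. -/
noncomputable def cc (p m : ℕ) : ℝ :=
  if m ≤ p then
    poch (2 * (m : ℝ) - p + 2) (2 * (p - m)) /
      (2 ^ (2 * (p - m)) * (m.factorial : ℝ) * ((p - m).factorial : ℝ))
  else 0

/-- The coefficients `f_p^{(q)} = (-1)^{p+q} q! (2q-p)! / (2^{2q-2p} p! (q-p)!)`. -/
noncomputable def fpq (q p : ℕ) : ℝ :=
  (-1 : ℝ) ^ (p + q) * (q.factorial : ℝ) * ((2 * q - p).factorial : ℝ) /
    (2 ^ (2 * q - 2 * p) * (p.factorial : ℝ) * ((q - p).factorial : ℝ))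

lemma poch_succ (f : ℝ) (n : ℕ) : poch f (n+1) = poch f n * (f + n) := by
  simp [poch, Finset.prod_range_succ]

lemma poch_succ' (f : ℝ) (n : ℕ) : poch f (n+1) = f * poch (f+1) n := by
  have h : ∀ i ∈ Finset.range n, (f + ((i + 1 : ℕ) : ℝ)) = ((f + 1) + (i : ℝ)) := by
    intro i _; push_cast; ring
  simp only [poch, Finset.prod_range_succ', Finset.prod_congr rfl h]
  rw [mul_comm]
  norm_num

lemma cc_zero (p m : ℕ) (h : 2*m + 2 ≤ p) : cc p m = 0 := by
  have hm : m ≤ p := by omega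
  rw [cc, if_pos hm]
  have : poch (2 * (m : ℝ) - p + 2) (2 * (p - m)) = 0 := by
    apply Finset.prod_eq_zero (i := p - (2*m + 2))
    · simp only [Finset.mem_range]; omega
    · have : ((p - (2*m+2) : ℕ) : ℝ) = (p : ℝ) - (2*m+2) := by
        push_cast [Nat.cast_sub h]; ring
      rw [this]; push_cast; ring
  rw [this, zero_div]

lemma cc_succ (m r : ℕ) (h : m ≤ r) :
    4 * ((r:ℝ) - m + 1) * cc (r+1) m = (2*(m:ℝ) - r + 1) * ((r:ℝ) + 2) * cc r m := by
  have h1 : m ≤ r + 1 := by omega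
  rw [cc, cc, if_pos h, if_pos h1]
  have e1 : r + 1 - m = (r - m) + 1 := by omega
  rw [e1]
  have e2 : 2 * ((r - m) + 1) = (2*(r-m)) + 1 + 1 := by ring
  rw [e2, poch_succ, poch_succ']
  have ec : ((r - m : ℕ) : ℝ) = (r:ℝ) - m := by push_cast [Nat.cast_sub h]; ring
  have hc1 : (2 * (m:ℝ) - (r+1) + 2) = (2*(m:ℝ) - r + 1) := by push_cast; ring
  have hc2 : (2 * (m:ℝ) - (r+1) + 2) + 1 = (2*(m:ℝ) - r + 2) := by push_cast; ring
  have hc3 : (2*(m:ℝ) - r + 2) + (2*(r-m) : ℕ) = (r:ℝ) + 2 := by push_cast [ec]; ring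
  rw [Nat.factorial_succ]
  push_cast [hc1, hc2, hc3, ec]
  have hp : (2:ℝ) ^ (2 * (r - m)) ≠ 0 := by positivity
  have hmf : ((m.factorial : ℝ)) ≠ 0 := by exact_mod_cast m.factorial_ne_zero
  have hkf : (((r-m).factorial : ℝ)) ≠ 0 := by exact_mod_cast (r-m).factorial_ne_zero
  rw [pow_succ, pow_succ]
  have hkk : (r:ℝ) - m + 1 ≠ 0 := by
    have : (m:ℝ) ≤ r := by exact_mod_cast h
    nlinarith
  field_simp
  ring

lemma fpq_succ (q r : ℕ) (h : r < q) :
    (2*(q:ℝ) - r) * ((r:ℝ) + 1) * fpq q (r+1) = -4 * ((q:ℝ) - r) * fpq q r := by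
  rw [fpq, fpq]
  have e1 : 2*q - (r+1) = (2*q - r) - 1 := by omega
  have e2 : 2*q - r = ((2*q - r) - 1) + 1 := by omega
  have e3 : q - r = (q - (r+1)) + 1 := by omega
  have e4 : 2*q - 2*r = (2*q - 2*(r+1)) + 1 + 1 := by omega
  rw [e1]
  conv_rhs => rw [e2, e3, e4]
  rw [Nat.factorial_succ, Nat.factorial_succ, Nat.factorial_succ, pow_succ, pow_succ]
  have ec1 : (((2*q - r) - 1 : ℕ) : ℝ) = 2*(q:ℝ) - r - 1 := by
    rw [show 2*q - r - 1 = 2*q - (r+1) by omega, Nat.cast_sub (by omega : r + 1 ≤ 2*q)]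
    push_cast; ring
  have ec2 : ((q - (r+1) : ℕ) : ℝ) = (q:ℝ) - r - 1 := by
    push_cast [Nat.cast_sub (by omega : r + 1 ≤ q)]; ring
  have hqf : ((q.factorial : ℝ)) ≠ 0 := by exact_mod_cast q.factorial_ne_zero
  have hrf : ((r.factorial : ℝ)) ≠ 0 := by exact_mod_cast r.factorial_ne_zero
  have hrf2 : (((2*q-r-1).factorial : ℝ)) ≠ 0 := by exact_mod_cast (2*q-r-1).factorial_ne_zero
  have hrf3 : (((q-(r+1)).factorial : ℝ)) ≠ 0 := by exact_mod_cast (q-(r+1)).factorial_ne_zero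
  have hp : (2:ℝ) ^ (2*q - 2*(r+1)) ≠ 0 := by positivity
  have hpow : ((-1:ℝ)) ^ (r + 1 + q) = (-1 : ℝ)^(r+q) * (-1) := by
    rw [show r + 1 + q = (r + q) + 1 by ring, pow_succ]
  rw [hpow]
  have hqr : (q:ℝ) - r ≠ 0 := by
    have : (r:ℝ) < q := by exact_mod_cast h
    linarith
  push_cast [ec1, ec2]
  have hqr2 : (q:ℝ) - r - 1 + 1 ≠ 0 := by ring_nf; exact hqr
  field_simp
  ring

lemma sum_formula (q m : ℕ) (hmq : m < q) : ∀ r, m ≤ r → r ≤ q →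
    ∑ p ∈ Finset.Icc m r, fpq q p * cc p m =
      fpq q r * cc r m * (((r:ℝ) - q) * ((r:ℝ) - (2*(m:ℝ)+1))) /
        (((q:ℝ) - (m:ℝ)) * ((r:ℝ) + 1)) := by
  intro r hmr
  induction r, hmr using Nat.le_induction with
  | base =>
    intro _
    rw [Finset.Icc_self, Finset.sum_singleton]
    have hqm : (q:ℝ) - m ≠ 0 := by
      have : (m:ℝ) < q := by exact_mod_cast hmq
      linarith
    have hm1 : (m:ℝ) + 1 ≠ 0 := by positivity
    have key : ((m:ℝ) - q) * ((m:ℝ) - (2*(m:ℝ)+1)) = ((q:ℝ) - m) * ((m:ℝ) + 1) := by ring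
    rw [mul_div_assoc, key, div_self (mul_ne_zero hqm hm1), mul_one]
  | succ r hr ih =>
    intro hrq
    have hrq' : r ≤ q := by omega
    rw [Finset.sum_Icc_succ_top (by omega : m ≤ r + 1), ih hrq']
    have hqm : (q:ℝ) - m ≠ 0 := by
      have : (m:ℝ) < q := by exact_mod_cast hmq
      linarith
    have hr1 : (r:ℝ) + 1 ≠ 0 := by positivity
    have hr2 : (r:ℝ) + 2 ≠ 0 := by positivity
    by_cases h2 : r ≤ 2*m
    · -- algebraic case
      have hrlt : r < q := by omega
      have h1 := fpq_succ q r hrlt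
      have hc := cc_succ m r hr
      have ha : (2*(q:ℝ) - r) ≠ 0 := by
        have : (r:ℝ) < q := by exact_mod_cast hrlt
        nlinarith
      have hb : 4*((r:ℝ) - m + 1) ≠ 0 := by
        have : (m:ℝ) ≤ r := by exact_mod_cast hr
        nlinarith
      have e1 : fpq q (r+1) = (-4*((q:ℝ) - r) * fpq q r) / ((2*(q:ℝ) - r) * ((r:ℝ)+1)) := by
        rw [eq_div_iff (mul_ne_zero ha hr1)]
        linear_combination h1
      have e2 : cc (r+1) m = ((2*(m:ℝ) - r + 1) * ((r:ℝ) + 2) * cc r m) / (4*((r:ℝ) - m + 1)) := by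
        rw [eq_div_iff hb]
        linear_combination hc
      rw [e1, e2]
      push_cast
      have hb' : (r:ℝ) - m + 1 ≠ 0 := fun h => hb (by rw [h]; ring)
      have ha' : (q:ℝ) * 2 - r ≠ 0 := by contrapose! ha; linarith
      have ha'' : -(r:ℝ) + q * 2 ≠ 0 := by contrapose! ha; linarith
      field_simp
      ring
    · -- degenerate case: r ≥ 2m+1
      have hcc1 : cc (r+1) m = 0 := cc_zero _ _ (by omega)
      rcases eq_or_lt_of_le (show 2*m+1 ≤ r by omega) with he | hlt
      · have hzero : (r:ℝ) - (2*(m:ℝ)+1) = 0 := by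
          rw [← he]; push_cast; ring
        rw [hcc1, hzero]
        simp
      · have hcc2 : cc r m = 0 := cc_zero _ _ (by omega)
        rw [hcc1, hcc2]
        simp

/-- Orthogonality relation `∑_{p=m}^{q} f_p^{(q)} c_m^{(p)} = δ_{m,q}`. -/
theorem fpq_cc_orthogonality (m q : ℕ) (hmq : m ≤ q) :
    ∑ p ∈ Finset.Icc m q, fpq q p * cc p m = if m = q then (1 : ℝ) else 0 := by
  rcases eq_or_lt_of_le hmq with he | hlt
  · subst he
    rw [if_pos rfl, Finset.Icc_self, Finset.sum_singleton]
    have hqf : ((m.factorial : ℝ)) ≠ 0 := by exact_mod_cast m.factorial_ne_zero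
    rw [fpq, cc, if_pos le_rfl]
    simp only [Nat.sub_self, mul_zero, Nat.sub_self, pow_zero, Nat.factorial_zero]
    rw [show 2*m - m = m by omega, show m + m = 2*m by ring, pow_mul]
    simp [poch]
    field_simp
  · rw [if_neg (by omega)]
    rw [sum_formula q m hlt q hmq le_rfl]
    simp
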